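/- arXiv:cs/9908016 — 3 statements merged into one kernel-verified Lean document; each statement's English description precedes it below -/
import Mathlib

section
/- Any quadrilateral mesh of a simply connected polygonal region contains either an interior vertex of degree 3 or a boundary vertex of degree 2. -/
/-- Any quadrilateral mesh of a simply connected polygonal region
contains either an interior vertex of degree 3 or a boundary vertex of degree 2.
The mesh is modeled combinatorially: the vertex set splits into boundary
vertices `B` (with `x = B.card`, each of degree ≥ 2) and interior vertices `I`
(each of degree ≥ 3), with `e` edges and `q` quadrilateral faces, satisfying
Euler's formula `x + i + q = e + 1`, the face–edge count `4q + x = 2e`, and the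
handshake identity `∑ deg = 2e`. -/
theorem quad_mesh_low_degree_vertex {V : Type*} [Fintype V] [DecidableEq V]
    (B I : Finset V) (deg : V → ℕ) (e q : ℕ)
    (hPart : B ∪ I = Finset.univ) (hDisj : Disjoint B I)
    (hEuler : B.card + I.card + q = e + 1)
    (hFaces : 4 * q + B.card = 2 * e)
    (hHandshake : ∑ v, deg v = 2 * e)
    (hI : ∀ v ∈ I, 3 ≤ deg v)
    (hB : ∀ v ∈ B, 2 ≤ deg v) :
    (∃ v ∈ I, deg v = 3) ∨ (∃ v ∈ B, deg v = 2) := by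
  by_contra h
  push_neg at h
  obtain ⟨h1, h2⟩ := h
  have hI4 : ∀ v ∈ I, 4 ≤ deg v := fun v hv => by
    have := hI v hv; have := h1 v hv; omega
  have hB3 : ∀ v ∈ B, 3 ≤ deg v := fun v hv => by
    have := hB v hv; have := h2 v hv; omega
  have hsplit : ∑ v, deg v = ∑ v ∈ B, deg v + ∑ v ∈ I, deg v := by
    rw [← Finset.sum_union hDisj, hPart]
  have hBsum : 3 * B.card ≤ ∑ v ∈ B, deg v := by
    calc 3 * B.card = ∑ _v ∈ B, 3 := by rw [Finset.sum_const]; ring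
    _ ≤ _ := Finset.sum_le_sum hB3
  have hIsum : 4 * I.card ≤ ∑ v ∈ I, deg v := by
    calc 4 * I.card = ∑ _v ∈ I, 4 := by rw [Finset.sum_const]; ring
    _ ≤ _ := Finset.sum_le_sum hI4
  omega
end

section
/- If a simple polygon has all interior angles at least 120°, then no quadrilateral mesh of the polygon can have all quadrilateral angles strictly less than 120°. -/
open Real in
/-- If a simple polygon has all interior angles at least 120°, then no
quadrilateral mesh of it can have all quadrilateral angles strictly less than 120°
(angles measured in radians; 120° = 2π/3, 360° = 2π).
The mesh is modeled combinatorially: vertices split into boundary vertices `B` and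
interior vertices `I`; vertex `v` is incident to `f v` faces, with face angles
`ang v 0, …, ang v (f v - 1)` at `v`, all positive.  At an interior vertex the
incident angles sum to 2π and the vertex degree is `f v`; at a boundary vertex they
sum to the boundary angle `bAngle v ≥ 2π/3` (which is π at a point interior to a
polygon edge and the polygon's interior angle ≥ 120° at a polygon vertex), and the
vertex degree is `f v + 1`.  Euler's formula, the face–edge count and the handshake
identity hold.  Assuming every face angle is < 2π/3 yields a contradiction. -/
theorem no_quad_mesh_all_angles_lt_120 {V : Type*} [Fintype V] [DecidableEq V]
    (B I : Finset V) (f : V → ℕ) (ang : V → ℕ → ℝ) (bAngle : V → ℝ) (e q : ℕ)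
    (hPart : B ∪ I = Finset.univ) (hDisj : Disjoint B I)
    (hEuler : B.card + I.card + q = e + 1)
    (hFaces : 4 * q + B.card = 2 * e)
    (hHandshake : (∑ v ∈ I, f v) + (∑ v ∈ B, (f v + 1)) = 2 * e)
    (hPos : ∀ v, ∀ k < f v, 0 < ang v k)
    (hIntSum : ∀ v ∈ I, ∑ k ∈ Finset.range (f v), ang v k = 2 * π)
    (hBdySum : ∀ v ∈ B, ∑ k ∈ Finset.range (f v), ang v k = bAngle v)
    (hBdyAngle : ∀ v ∈ B, 2 * π / 3 ≤ bAngle v)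
    (hSmall : ∀ v, ∀ k < f v, ang v k < 2 * π / 3) :
    False := by
  have hpi : (0:ℝ) < π := Real.pi_pos
  by_cases h : (∃ v ∈ I, f v ≤ 3) ∨ (∃ v ∈ B, f v ≤ 1)
  · rcases h with ⟨v, hv, hf⟩ | ⟨v, hv, hf⟩
    · -- interior vertex of degree ≤ 3
      have hsum := hIntSum v hv
      rcases Nat.eq_zero_or_pos (f v) with h0 | h0
      · rw [h0] at hsum; simp at hsum
      · have hlt : ∑ k ∈ Finset.range (f v), ang v k <
            ∑ k ∈ Finset.range (f v), (2 * π / 3) := by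
          apply Finset.sum_lt_sum_of_nonempty
          · exact Finset.nonempty_range_iff.mpr (by omega)
          · intro k hk
            exact hSmall v k (Finset.mem_range.mp hk)
        rw [hsum, Finset.sum_const, Finset.card_range] at hlt
        have hf3 : (f v : ℝ) ≤ 3 := by exact_mod_cast hf
        rw [nsmul_eq_mul] at hlt
        nlinarith
    · -- boundary vertex of degree ≤ 2, i.e. f v ≤ 1
      have hsum := hBdySum v hv
      have hge := hBdyAngle v hv
      rcases Nat.eq_zero_or_pos (f v) with h0 | h0
      · rw [h0] at hsum; simp at hsum; nlinarith
      · have hlt : ∑ k ∈ Finset.range (f v), ang v k <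
            ∑ k ∈ Finset.range (f v), (2 * π / 3) := by
          apply Finset.sum_lt_sum_of_nonempty
          · exact Finset.nonempty_range_iff.mpr (by omega)
          · intro k hk
            exact hSmall v k (Finset.mem_range.mp hk)
        rw [hsum, Finset.sum_const, Finset.card_range] at hlt
        have hf1 : (f v : ℝ) ≤ 1 := by exact_mod_cast hf
        rw [nsmul_eq_mul] at hlt
        nlinarith
  · push_neg at h
    obtain ⟨hI, hB⟩ := h
    have hI4 : ∀ v ∈ I, 4 ≤ f v := fun v hv => by have := hI v hv; omega
    have hB2 : ∀ v ∈ B, 2 ≤ f v + 1 + 1 := fun v hv => by have := hB v hv; omega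
    have hSI : 4 * I.card ≤ ∑ v ∈ I, f v := by
      calc 4 * I.card = I.card • 4 := by rw [smul_eq_mul, mul_comm]
        _ ≤ ∑ v ∈ I, f v := Finset.card_nsmul_le_sum I f 4 hI4
    have hSB : 3 * B.card ≤ ∑ v ∈ B, (f v + 1) := by
      have : ∀ v ∈ B, 3 ≤ f v + 1 := fun v hv => by have := hB v hv; omega
      calc 3 * B.card = B.card • 3 := by rw [smul_eq_mul, mul_comm]
        _ ≤ ∑ v ∈ B, (f v + 1) := Finset.card_nsmul_le_sum B _ 3 this
    omega
end

section
/- Given three mutually externally tangent circles in the plane, their three pairwise points of tangency lie on a common circle, namely the incircle of the triangle formed by the three centers. -/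
/-!
The incenter `I` has the same power `r₀ r₁ r₂ / (r₀ + r₁ + r₂)` with respect to all three
circles (Leibniz's formula for the distance from a barycentric combination), i.e. it is their
radical center. Stewart's theorem then shows that a point with power `k` with respect to two
externally tangent circles is at squared distance `k` from their tangency point.
-/

open AffineMap RealInnerProductSpace

section Stewart

variable {V P : Type*} [NormedAddCommGroup V] [InnerProductSpace ℝ V] [MetricSpace P]
  [NormedAddTorsor V P]

theorem dist_lineMap_sq (p a b : P) (c : ℝ) :
    dist p (lineMap a b c) ^ 2 =
      (1 - c) * dist p a ^ 2 + c * dist p b ^ 2 - c * (1 - c) * dist a b ^ 2 := by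
  have hb : b -ᵥ p = (b -ᵥ a) + (a -ᵥ p) := (vsub_add_vsub_cancel b a p).symm
  have ht : lineMap a b c -ᵥ p = c • (b -ᵥ a) + (a -ᵥ p) := by
    rw [lineMap_apply, vadd_vsub_assoc]
  simp only [dist_eq_norm_vsub' V]
  rw [ht, hb, norm_add_sq_real, norm_add_sq_real, norm_smul, real_inner_smul_left, mul_pow,
    Real.norm_eq_abs, sq_abs]
  ring

theorem dist_sq_lineMap_of_dist_sq_sub_sq_eq {p a b : P} {ra rb k : ℝ}
    (hab : dist a b = ra + rb) (hr : ra + rb ≠ 0)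
    (ha : dist p a ^ 2 - ra ^ 2 = k) (hb : dist p b ^ 2 - rb ^ 2 = k) :
    dist p (lineMap a b (ra / (ra + rb))) ^ 2 = k := by
  rw [dist_lineMap_sq, hab, eq_add_of_sub_eq ha, eq_add_of_sub_eq hb]
  field_simp
  ring

end Stewart

section Leibniz

variable {V : Type*} [NormedAddCommGroup V] [InnerProductSpace ℝ V]

theorem dist_smul_add_smul_add_smul_sq {w₀ w₁ w₂ : ℝ} (hw : w₀ + w₁ + w₂ = 1) (x₀ x₁ x₂ y : V) :
    dist (w₀ • x₀ + w₁ • x₁ + w₂ • x₂) y ^ 2 =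
      w₀ * dist x₀ y ^ 2 + w₁ * dist x₁ y ^ 2 + w₂ * dist x₂ y ^ 2 -
        (w₀ * w₁ * dist x₀ x₁ ^ 2 + w₀ * w₂ * dist x₀ x₂ ^ 2 + w₁ * w₂ * dist x₁ x₂ ^ 2) := by
  have hv : w₀ • x₀ + w₁ • x₁ + w₂ • x₂ - y = w₀ • (x₀ - y) + w₁ • (x₁ - y) + w₂ • (x₂ - y) := by
    linear_combination (norm := module) hw • y
  simp only [dist_eq_norm, hv, ← sub_sub_sub_cancel_right x₀ x₁ y,
    ← sub_sub_sub_cancel_right x₀ x₂ y, ← sub_sub_sub_cancel_right x₁ x₂ y]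
  generalize x₀ - y = a₀, x₁ - y = a₁, x₂ - y = a₂
  simp only [← real_inner_self_eq_norm_sq, inner_add_left, inner_add_right, inner_sub_left,
    inner_sub_right, real_inner_smul_left, real_inner_smul_right, real_inner_comm a₀ a₁,
    real_inner_comm a₀ a₂, real_inner_comm a₁ a₂]
  linear_combination (w₀ * ⟪a₀, a₀⟫ + w₁ * ⟪a₁, a₁⟫ + w₂ * ⟪a₂, a₂⟫) * hw

theorem dist_incenter_sq_sub_sq (O : Fin 3 → V) (r : Fin 3 → ℝ) (hs : r 0 + r 1 + r 2 ≠ 0)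
    (htan : ∀ i j, i ≠ j → dist (O i) (O j) = r i + r j) (i : Fin 3) :
    dist ((2 * (r 0 + r 1 + r 2))⁻¹ •
      ((r 1 + r 2) • O 0 + (r 0 + r 2) • O 1 + (r 0 + r 1) • O 2)) (O i) ^ 2 - r i ^ 2 =
        r 0 * r 1 * r 2 / (r 0 + r 1 + r 2) := by
  have hw : (r 1 + r 2) / (2 * (r 0 + r 1 + r 2)) + (r 0 + r 2) / (2 * (r 0 + r 1 + r 2)) +
      (r 0 + r 1) / (2 * (r 0 + r 1 + r 2)) = 1 := by
    field_simp
    ring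
  rw [smul_add, smul_add, smul_smul, smul_smul, smul_smul, ← div_eq_inv_mul, ← div_eq_inv_mul,
    ← div_eq_inv_mul, dist_smul_add_smul_add_smul_sq hw]
  fin_cases i <;>
    simp only [Fin.zero_eta, Fin.mk_one, Fin.reduceFinMk, Fin.isValue, dist_self, ne_eq, Fin.reduceEq,
      not_false_eq_true, htan] <;>
    field_simp <;> ring

end Leibniz

/-- Three mutually externally tangent circles, with centers `O i` and
radii `r i` (so `dist (O i) (O j) = r i + r j` for `i ≠ j`), have their three
pairwise tangency points (the point of tangency of circles `i` and `j` lies on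
segment `O i O j` at distance `r i` from `O i`) on a common circle, centered at
the incenter of the triangle `O 0 O 1 O 2` (written in barycentric form with
weights the opposite side lengths `r j + r k`). -/
theorem tangency_points_of_three_tangent_circles_concyclic
    (O : Fin 3 → EuclideanSpace ℝ (Fin 2)) (r : Fin 3 → ℝ)
    (hr : ∀ i, 0 < r i)
    (htan : ∀ i j, i ≠ j → dist (O i) (O j) = r i + r j)
    (t : Fin 3 → Fin 3 → EuclideanSpace ℝ (Fin 2))
    (ht : ∀ i j, t i j = AffineMap.lineMap (O i) (O j) (r i / (r i + r j)))
    (incenter : EuclideanSpace ℝ (Fin 2))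
    (hinc : incenter = (2 * (r 0 + r 1 + r 2))⁻¹ •
      ((r 1 + r 2) • O 0 + (r 0 + r 2) • O 1 + (r 0 + r 1) • O 2)) :
    ∃ ρ : ℝ, dist incenter (t 0 1) = ρ ∧ dist incenter (t 1 2) = ρ ∧
      dist incenter (t 0 2) = ρ := by
  have hpow := dist_incenter_sq_sub_sq O r (by linarith [hr 0, hr 1, hr 2]) htan
  rw [← hinc] at hpow
  have hdist (i j : Fin 3) (hij : i ≠ j) :
      dist incenter (t i j) ^ 2 = r 0 * r 1 * r 2 / (r 0 + r 1 + r 2) := by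
    rw [ht]
    exact dist_sq_lineMap_of_dist_sq_sub_sq_eq (htan i j hij)
      (by linarith [hr i, hr j]) (hpow i) (hpow j)
  refine ⟨dist incenter (t 0 1), rfl, ?_, ?_⟩ <;>
    rw [← sq_eq_sq₀ dist_nonneg dist_nonneg, hdist _ _ (by decide), hdist _ _ (by decide)]
end
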